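/- arXiv:1205.2335 — 4 statements merged into one kernel-verified Lean document; each statement's English description precedes it below -/
import Mathlib

section
/- Let E ⊆ [0,∞) be strongly porous on the right at 0. Then E is completely strongly porous if and only if for every almost decreasing sequence τ̃ = {τₙ} in E∖{0} with τₙ → 0 there exists a sequence h̃ = {hₙ} of positive numbers with hₙ → 0 and λ(E,0,hₙ)/hₙ → p⁺(E,0) such that τ̃ ≍ h̃. -/
open Filter Set Topology ENNReal

/-- λ(E,0,h): the supremum of lengths of open subintervals of (0,h) disjoint from E. -/
noncomputable def lambda0 (E : Set ℝ) (h : ℝ) : ℝ :=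
  sSup {l : ℝ | ∃ a b : ℝ, 0 ≤ a ∧ a ≤ b ∧ b ≤ h ∧ Set.Ioo a b ∩ E = ∅ ∧ l = b - a}

/-- p⁺(E,0): the right porosity of E at 0. -/
noncomputable def porosity (E : Set ℝ) : ℝ :=
  Filter.limsup (fun h => lambda0 E h / h) (nhdsWithin 0 (Set.Ioi 0))

/-- 0 is an accumulation point of E (E ⊆ [0,∞), relative topology of [0,∞)). -/
def AccZero (E : Set ℝ) : Prop := ∀ ε > 0, ∃ x ∈ E, 0 < x ∧ x < ε

/-- (a,b) is a connected component of the exterior of E in [0,∞):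
an open interval in [0,∞) disjoint from E, maximal with this property. -/
def IsCompExt (E : Set ℝ) (a b : ℝ) : Prop :=
  0 ≤ a ∧ a < b ∧ Set.Ioo a b ∩ E = ∅ ∧
  ∀ c d : ℝ, 0 ≤ c → Set.Ioo a b ⊆ Set.Ioo c d → (c, d) ≠ (a, b) → Set.Ioo c d ∩ E ≠ ∅

/-- Membership in Ĩ_E. -/
def memIE (E : Set ℝ) (A : ℕ → ℝ × ℝ) : Prop :=
  (∀ n, 0 < (A n).1) ∧ (∀ n, IsCompExt E (A n).1 (A n).2) ∧
  Filter.Tendsto (fun n => (A n).1) Filter.atTop (nhds 0) ∧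
  Filter.Tendsto (fun n => ((A n).2 - (A n).1) / (A n).2) Filter.atTop (nhds 1)

/-- Almost decreasing sequence: eventually nonincreasing. -/
def AlmostDecr (τ : ℕ → ℝ) : Prop := ∀ᶠ n in Filter.atTop, τ (n + 1) ≤ τ n

/-- Membership in Ẽ₀^d: almost decreasing sequences in E∖{0} tending to 0. -/
def memE0d (E : Set ℝ) (τ : ℕ → ℝ) : Prop :=
  AlmostDecr τ ∧ Filter.Tendsto τ Filter.atTop (nhds 0) ∧ ∀ n, τ n ∈ E \ {0}

/-- Weak equivalence ≍ of sequences: c₁ aₙ ≤ γₙ ≤ c₂ aₙ for large n. -/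
def SeqEquiv (a γ : ℕ → ℝ) : Prop :=
  ∃ c₁ c₂ : ℝ, 0 < c₁ ∧ 0 < c₂ ∧ ∀ᶠ n in Filter.atTop, c₁ * a n ≤ γ n ∧ γ n ≤ c₂ * a n

/-- E is τ̃-strongly porous. -/
def StronglyPorousWrt (E : Set ℝ) (τ : ℕ → ℝ) : Prop :=
  ∃ A : ℕ → ℝ × ℝ, memIE E A ∧ SeqEquiv (fun n => (A n).1) τ

/-- E is completely strongly porous at 0. -/
def CSP (E : Set ℝ) : Prop := ∀ τ : ℕ → ℝ, memE0d E τ → StronglyPorousWrt E τ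

/-- Membership in Ĩ_E^d: first coordinates almost decreasing. -/
def memIEd (E : Set ℝ) (A : ℕ → ℝ × ℝ) : Prop := memIE E A ∧ AlmostDecr (fun n => (A n).1)

/-- Membership in Ĩ_E^{sd}: first coordinates eventually strictly decreasing. -/
def memIEsd (E : Set ℝ) (A : ℕ → ℝ × ℝ) : Prop :=
  memIE E A ∧ ∀ᶠ n in Filter.atTop, (A (n + 1)).1 < (A n).1

/-- The preorder Ã ⪯ L̃. -/
def Prec (A L : ℕ → ℝ × ℝ) : Prop :=
  ∃ N₁ : ℕ, ∃ f : ℕ → ℕ, ∀ n ≥ N₁, (A n).1 = (L (f n)).1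

/-- L̃ is universal: every Ã ∈ Ĩ_E^d satisfies Ã ⪯ L̃. -/
def Universal (E : Set ℝ) (L : ℕ → ℝ × ℝ) : Prop :=
  ∀ A : ℕ → ℝ × ℝ, memIEd E A → Prec A L

/-- M(L̃) = limsup lₙ/mₙ₊₁ (in [0,∞]). -/
noncomputable def Mq (L : ℕ → ℝ × ℝ) : ℝ≥0∞ :=
  Filter.limsup (fun n => ENNReal.ofReal ((L n).1 / (L (n + 1)).2)) Filter.atTop

/-- C(τ̃) = inf over {(aₙ,bₙ)} ∈ Ĩ_E with τₙ ≤ aₙ eventually of limsup aₙ/τₙ. -/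
noncomputable def Cseq (E : Set ℝ) (τ : ℕ → ℝ) : ℝ≥0∞ :=
  ⨅ (A : ℕ → ℝ × ℝ) (_ : memIE E A ∧ ∀ᶠ n in Filter.atTop, τ n ≤ (A n).1),
    Filter.limsup (fun n => ENNReal.ofReal ((A n).1 / τ n)) Filter.atTop

/-- C_E = sup over τ̃ ∈ Ẽ₀^d of C(τ̃). -/
noncomputable def CE (E : Set ℝ) : ℝ≥0∞ := ⨆ (τ : ℕ → ℝ) (_ : memE0d E τ), Cseq E τ

/-- E is uniformly strongly porous at 0. -/
def USP (E : Set ℝ) : Prop :=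
  ∃ c : ℝ, 0 < c ∧ ∀ τ : ℕ → ℝ, memE0d E τ → ∃ A : ℕ → ℝ × ℝ, memIE E A ∧
    (∀ᶠ n in Filter.atTop, τ n ≤ (A n).1) ∧
    Filter.limsup (fun n => ENNReal.ofReal ((A n).1 / τ n)) Filter.atTop ≤ ENNReal.ofReal c

/-!
Both directions are about components `(a, b)` of the exterior of `E` seen at the scale `τₙ`.
Scales `hₙ ≍ τₙ` with `λ(E,0,hₙ)/hₙ → 1` exist as soon as there are components with
`a = o(τₙ)` and `b ≳ τₙ`, while complete strong porosity needs components with `a ≍ τₙ` and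
`b/a → ∞`. Each kind of component is obtained from the other hypothesis by contradiction: if it
is missing for infinitely many `n`, then `E` has points in a window tied to `τₙ`
(`[cτₙ/(j+2), cτₙ]`, resp. `(Kτₙ, (j+2)Kτₙ]`). Interleaving such points for all values of the
parameter gives one decreasing sequence `σ` in `E`, and the hypothesis applied to `σ` is violated
at a suitable level: the component it provides would have to contain `τₙ`, resp. every free
subinterval of `(0, hₘ)` is shorter than `θ hₘ` for a fixed `θ < 1`.
-/

lemma exists_tendsto_atTop_eventually_diag {P : ℕ → ℕ → Prop} (h : ∀ j, ∀ᶠ n in atTop, P j n) :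
    ∃ J : ℕ → ℕ, Tendsto J atTop atTop ∧ ∀ᶠ n in atTop, P (J n) n := by
  choose N hN using fun j => eventually_atTop.1 (h j)
  let M : ℕ → ℕ := fun j => (Finset.range (j + 1)).sup N + j
  have hNM : ∀ j, N j ≤ M j := fun j =>
    Nat.le_add_right_of_le (Finset.le_sup (Finset.self_mem_range_succ j))
  refine ⟨fun n => Nat.findGreatest (fun j => M j ≤ n) n, tendsto_atTop.2 fun j => ?_, ?_⟩
  · filter_upwards [eventually_ge_atTop (M j)] with n hn
    exact Nat.le_findGreatest ((Nat.le_add_left j _).trans hn) hn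
  · filter_upwards [eventually_ge_atTop (M 0)] with n hn
    exact hN _ n ((hNM _).trans (Nat.findGreatest_spec (P := fun j => M j ≤ n) n.zero_le hn))

lemma exists_forall_eventually_of_eventually_exists {α : Type*} {P : ℕ → α → Prop}
    {Q : α → Prop} (h : ∀ᶠ n in atTop, ∃ x, P n x) (hPQ : ∀ n x, P n x → Q x) :
    ∃ f : ℕ → α, (∀ n, Q (f n)) ∧ ∀ᶠ n in atTop, P n (f n) := by
  obtain ⟨f, hf⟩ := h.choice
  obtain ⟨N, hN⟩ := eventually_atTop.1 hf
  refine ⟨fun n => f (max n N), fun n => hPQ _ _ (hN _ (le_max_right n N)), ?_⟩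
  filter_upwards [eventually_ge_atTop N] with n hn
  simpa [max_eq_left hn] using hN n hn

lemma tendsto_sub_div_self_iff {a b : ℕ → ℝ} (hb : ∀ n, b n ≠ 0) :
    Tendsto (fun n => (b n - a n) / b n) atTop (𝓝 1) ↔
      Tendsto (fun n => a n / b n) atTop (𝓝 0) := by
  have hsub : (fun n => (b n - a n) / b n) = fun n => 1 - a n / b n :=
    funext fun n => by rw [sub_div, div_self (hb n)]
  simpa [hsub] using tendsto_const_sub_iff (1 : ℝ) (c := 0) (f := fun n => a n / b n) (l := atTop)

def HasPorousScales (E : Set ℝ) (τ : ℕ → ℝ) : Prop :=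
  ∃ h : ℕ → ℝ, (∀ n, 0 < h n) ∧ Tendsto h atTop (𝓝 0) ∧
    Tendsto (fun n => lambda0 E (h n) / h n) atTop (𝓝 1) ∧ SeqEquiv h τ

def ShortGaps (E : Set ℝ) (r u v : ℝ) : Prop :=
  ∀ a b, IsCompExt E a b → u ≤ a → a ≤ v → b < r * a

section Exterior

variable {E : Set ℝ}

lemma le_or_ge_of_Ioo_inter_eq_empty {a b x : ℝ} (hfree : Ioo a b ∩ E = ∅) (hx : x ∈ E) :
    x ≤ a ∨ b ≤ x := by
  by_contra! h
  exact (eq_empty_iff_forall_notMem.1 hfree x) ⟨h, hx⟩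

lemma exists_isCompExt_of_Ioo_inter_eq_empty {u v : ℝ} (hu : 0 ≤ u) (huv : u < v)
    (hfree : Ioo u v ∩ E = ∅) (htop : (E ∩ Ici v).Nonempty) :
    ∃ a b, IsCompExt E a b ∧ a ≤ u ∧ v ≤ b := by
  let S := insert 0 E ∩ Iic u
  have hSne : S.Nonempty := ⟨0, mem_insert _ _, hu⟩
  have hSbdd : BddAbove S := ⟨u, fun x hx => hx.2⟩
  have hTbdd : BddBelow (E ∩ Ici v) := ⟨v, fun x hx => hx.2⟩
  have hau : sSup S ≤ u := csSup_le hSne fun x hx => hx.2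
  have hvb : v ≤ sInf (E ∩ Ici v) := le_csInf htop fun x hx => hx.2
  have hab : sSup S < sInf (E ∩ Ici v) := by linarith
  refine ⟨sSup S, sInf (E ∩ Ici v), ⟨le_csSup hSbdd ⟨mem_insert _ _, hu⟩, hab, ?_, ?_⟩, hau, hvb⟩
  · refine eq_empty_iff_forall_notMem.2 fun e ⟨⟨hae, heb⟩, heE⟩ => ?_
    rcases le_or_gt e u with heu | hue
    · exact (le_csSup hSbdd ⟨mem_insert_of_mem _ heE, heu⟩).not_gt hae
    rcases lt_or_ge e v with hev | hve
    · exact (eq_empty_iff_forall_notMem.1 hfree e) ⟨⟨hue, hev⟩, heE⟩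
    · exact (csInf_le hTbdd ⟨heE, hve⟩).not_gt heb
  · intro c d hc hsub hne
    obtain ⟨hca, hbd⟩ := (Ioo_subset_Ioo_iff hab).1 hsub
    rw [← nonempty_iff_ne_empty]
    rcases hca.lt_or_eq with hlt | hca
    · obtain ⟨e, ⟨he0 | heE, heu⟩, hce⟩ := exists_lt_of_lt_csSup hSne hlt
      · linarith [he0 ▸ hce]
      · exact ⟨e, ⟨hce, by linarith [show e ≤ u from heu]⟩, heE⟩
    · have hbd' : sInf (E ∩ Ici v) < d := hbd.lt_of_ne fun h => hne (by rw [hca, h])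
      obtain ⟨e, ⟨heE, hve⟩, hed⟩ := exists_lt_of_csInf_lt htop hbd'
      exact ⟨e, ⟨by linarith [show v ≤ e from hve], hed⟩, heE⟩

lemma lambda0_le_self {h : ℝ} (hh : 0 ≤ h) : lambda0 E h ≤ h :=
  Real.sSup_le (by rintro l ⟨a, b, ha, -, hbh, -, rfl⟩; linarith) hh

lemma le_lambda0 {a b h : ℝ} (ha : 0 ≤ a) (hab : a ≤ b) (hbh : b ≤ h)
    (hfree : Ioo a b ∩ E = ∅) : b - a ≤ lambda0 E h :=
  le_csSup ⟨h, by rintro l ⟨a', b', ha', -, hbh', -, rfl⟩; linarith⟩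
    ⟨a, b, ha, hab, hbh, hfree, rfl⟩

lemma lambda0_le_of_forall {h M : ℝ} (hM : 0 ≤ M)
    (hM' : ∀ a b, 0 ≤ a → a ≤ b → b ≤ h → Ioo a b ∩ E = ∅ → b - a ≤ M) :
    lambda0 E h ≤ M :=
  Real.sSup_le (by rintro l ⟨a, b, ha, hab, hbh, hfree, rfl⟩; exact hM' a b ha hab hbh hfree) hM

lemma lt_mul_of_short_gaps {r u v α β : ℝ} (hu0 : 0 ≤ u) (hu : u ∈ E) (hr : 0 ≤ r)
    (hshort : ShortGaps E r u v)
    (huα : u ≤ α) (hαv : α ≤ v) (hαβ : α < β) (hfree : Ioo α β ∩ E = ∅)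
    (htop : (E ∩ Ici β).Nonempty) : β < r * α := by
  obtain ⟨a, b, hab, haα, hβb⟩ :=
    exists_isCompExt_of_Ioo_inter_eq_empty (hu0.trans huα) hαβ hfree htop
  have hua : u ≤ a :=
    (le_or_ge_of_Ioo_inter_eq_empty hab.2.2.1 hu).resolve_right fun hbu => by linarith
  calc β ≤ b := hβb
    _ < r * a := hshort a b hab hua (haα.trans hαv)
    _ ≤ r * α := mul_le_mul_of_nonneg_left haα hr

lemma exists_mem_Ioc_of_short_gaps {r u v : ℝ} (hu0 : 0 ≤ u) (hu : u ∈ E) (hr : 0 ≤ r)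
    (hshort : ShortGaps E r u v) (huv : u ≤ v) (hv : 0 < v)
    (htop : (E ∩ Ici ((r + 2) * v)).Nonempty) : ∃ y ∈ E, v < y ∧ y ≤ (r + 2) * v := by
  by_contra! hnone
  have hfree : Ioo v ((r + 2) * v) ∩ E = ∅ :=
    eq_empty_iff_forall_notMem.2 fun y ⟨⟨hvy, hyr⟩, hy⟩ => (hnone y hy hvy).not_ge hyr.le
  have := lt_mul_of_short_gaps hu0 hu hr hshort huv le_rfl (by nlinarith) hfree htop
  nlinarith

lemma lambda0_le_of_short_gaps {r u v h : ℝ} (hu0 : 0 ≤ u) (hu : u ∈ E) (hr : 0 ≤ r)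
    (hshort : ShortGaps E r u v) (htop : (E ∩ Ici h).Nonempty) :
    lambda0 E h ≤ max u (max (r / (r + 1) * h) (h - v)) := by
  refine lambda0_le_of_forall (le_max_of_le_left hu0) fun α β hα hαβ hβh hfree => ?_
  rcases lt_or_ge α u with hαu | huα
  · have hβu : β ≤ u := (le_or_ge_of_Ioo_inter_eq_empty hfree hu).resolve_left (not_le.2 hαu)
    exact le_max_of_le_left (by linarith)
  rcases le_or_gt α v with hαv | hvα
  · rcases hαβ.lt_or_eq with hlt | rfl
    · obtain ⟨e, he, hhe⟩ := htop
      have hβ := lt_mul_of_short_gaps hu0 hu hr hshort huα hαv hlt hfree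
        ⟨e, he, hβh.trans (show h ≤ e from hhe)⟩
      refine le_max_of_le_right (le_max_of_le_left ?_)
      rw [div_mul_eq_mul_div, le_div_iff₀ (by linarith)]
      nlinarith
    · exact le_max_of_le_left (by linarith)
  · exact le_max_of_le_right (le_max_of_le_right (by linarith))

lemma exists_mem_Icc_of_gaps_below {c t : ℝ} {j : ℕ} (ht : 0 < t) (htE : t ∈ E) (hc : 0 < c)
    (hc1 : c ≤ 1)
    (hgap : ∀ a b, IsCompExt E a b → j * a ≤ t → b < c * t) :
    ∃ x ∈ E, c * t / (j + 2) ≤ x ∧ x ≤ c * t := by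
  by_contra! hnone
  have hfree : Ioo (c * t / (j + 2)) (c * t) ∩ E = ∅ :=
    eq_empty_iff_forall_notMem.2 fun x ⟨⟨hlo, hhi⟩, hx⟩ => (hnone x hx hlo.le).not_ge hhi.le
  obtain ⟨a, b, hab, hau, hvb⟩ := exists_isCompExt_of_Ioo_inter_eq_empty (by positivity)
    (div_lt_self (by positivity) (by linarith [(j.cast_nonneg : (0 : ℝ) ≤ j)])) hfree
    ⟨t, htE, show c * t ≤ t by nlinarith⟩
  have hja : j * a ≤ t :=
    calc (j : ℝ) * a ≤ (j + 2) * (c * t / (j + 2)) := by gcongr; exacts [hab.1, by linarith]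
      _ = c * t := by field_simp
      _ ≤ t := by nlinarith
  exact (hgap a b hab hja).not_ge hvb

end Exterior

section Sequences

variable {E : Set ℝ} {τ : ℕ → ℝ}

lemma memE0d.pos (hE : E ⊆ Ici 0) (hτ : memE0d E τ) (n : ℕ) : 0 < τ n :=
  (hE (hτ.2.2 n).1).lt_of_ne' (hτ.2.2 n).2

lemma exists_memE0d_frequently {Q : ℕ → ℝ → Prop}
    (hQ : ∀ q ε, 0 < ε → ∃ x ∈ E, 0 < x ∧ x < ε ∧ Q q x) :
    ∃ σ, memE0d E σ ∧ ∀ q, ∃ᶠ m in atTop, Q q (σ m) := by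
  choose! F hFE hF0 hFε hFQ using hQ
  -- the level `(Nat.unpair m).1` takes every value `q` at `m = Nat.pair q N` for all `N`
  let lev : ℕ → ℕ := fun m => (Nat.unpair m).1
  let ε : ℕ → ℝ := fun m =>
    Nat.rec 1 (fun k e => min (F (lev k) e) (1 / ((k : ℝ) + 2))) m
  let σ : ℕ → ℝ := fun m => F (lev m) (ε m)
  have hε : ∀ m, 0 < ε m := by
    intro m
    induction m with
    | zero => exact one_pos
    | succ k ih => exact lt_min (hF0 _ _ ih) (by positivity)
  have hεle : ∀ m, ε m ≤ 1 / ((m : ℝ) + 1) := by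
    rintro (_ | k)
    · simp [ε]
    · exact (min_le_right _ _).trans_eq (by push_cast; ring_nf)
  have hanti : StrictAnti σ := strictAnti_nat_of_succ_lt fun m =>
    (hFε _ _ (hε (m + 1))).trans_le (min_le_left _ _)
  have hlim : Tendsto σ atTop (𝓝 0) :=
    squeeze_zero (fun m => (hF0 _ _ (hε m)).le)
      (fun m => ((hFε _ _ (hε m)).trans_le (hεle m)).le) tendsto_one_div_add_atTop_nhds_zero_nat
  refine ⟨σ, ⟨Eventually.of_forall fun m => (hanti (Nat.lt_succ_self m)).le, hlim,
    fun m => ⟨hFE _ _ (hε m), (hF0 _ _ (hε m)).ne'⟩⟩, fun q => frequently_atTop.2 fun N =>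
    ⟨Nat.pair q N, Nat.right_le_pair q N, ?_⟩⟩
  simpa [σ, lev, Nat.unpair_pair] using hFQ _ _ (hε (Nat.pair q N))

lemma memIE.eventually_mul_lt {A : ℕ → ℝ × ℝ} (hA : memIE E A) (R : ℝ) :
    ∀ᶠ n in atTop, R * (A n).1 < (A n).2 := by
  have hb : ∀ n, 0 < (A n).2 := fun n => (hA.1 n).trans (hA.2.1 n).2.1
  have hR : 0 < max R 1 := lt_max_of_lt_right one_pos
  filter_upwards [((tendsto_sub_div_self_iff fun n => (hb n).ne').1 hA.2.2.2).eventually_lt_const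
    (inv_pos.2 hR)] with n hn
  rw [div_lt_iff₀ (hb n), inv_mul_eq_div, lt_div_iff₀ hR] at hn
  nlinarith [le_max_left R 1, hA.1 n]

lemma exists_memE0d_frequently_mem_Icc (hE : E ⊆ Ici 0) (hτ : memE0d E τ) {c : ℕ → ℝ}
    {j : ℕ → ℕ} (hc : ∀ q, 0 < c q) (hc1 : ∀ q, c q ≤ 1)
    (hj : ∀ q, ∃ᶠ n in atTop, ∀ a b, IsCompExt E a b → j q * a ≤ τ n → b < c q * τ n) :
    ∃ σ, memE0d E σ ∧
      ∀ q, ∃ᶠ m in atTop, ∃ n, c q * τ n / (j q + 2) ≤ σ m ∧ σ m ≤ c q * τ n := by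
  refine exists_memE0d_frequently
    (Q := fun q x => ∃ n, c q * τ n / (j q + 2) ≤ x ∧ x ≤ c q * τ n) fun q ε hε => ?_
  obtain ⟨n, hn, hnε⟩ := ((hj q).and_eventually (hτ.2.1.eventually_lt_const hε)).exists
  have hτn := hτ.pos hE n
  obtain ⟨x, hxE, hlo, hhi⟩ :=
    exists_mem_Icc_of_gaps_below hτn (hτ.2.2 n).1 (hc q) (hc1 q) hn
  have hx : 0 < x := lt_of_lt_of_le (by have := hc q; positivity) hlo
  exact ⟨x, hxE, hx, hhi.trans_lt ((mul_le_of_le_one_left hτn.le (hc1 q)).trans_lt hnε),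
    n, hlo, hhi⟩

lemma CSP.exists_gaps_below (hE : E ⊆ Ici 0) (hcsp : CSP E) (hτ : memE0d E τ) :
    ∃ c > 0, ∀ j : ℕ, ∀ᶠ n in atTop, ∃ a b, IsCompExt E a b ∧ j * a ≤ τ n ∧ c * τ n ≤ b := by
  by_contra! hneg
  choose j hj using fun q : ℕ => hneg ((q : ℝ) + 1)⁻¹ (by positivity)
  obtain ⟨σ, hσ, hσQ⟩ := exists_memE0d_frequently_mem_Icc hE hτ (fun q => by positivity)
    (fun q => inv_le_one_of_one_le₀ (le_add_of_nonneg_left q.cast_nonneg)) hj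
  obtain ⟨A, hA, c₁, c₂, hc₁, hc₂, hAσ⟩ := hcsp σ hσ
  obtain ⟨q, hq⟩ := exists_nat_gt c₁⁻¹
  set c : ℝ := ((q : ℝ) + 1)⁻¹
  have hcc₁ : c < c₁ := inv_lt_of_inv_lt₀ hc₁ (hq.trans (lt_add_one _))
  set p : ℝ := c / (j q + 2)
  have hp : 0 < p := by positivity
  obtain ⟨m, ⟨n, hpσ, hσc⟩, ⟨hc₁a, hac₂⟩, hRab⟩ :=
    ((hσQ q).and_eventually (hAσ.and (hA.eventually_mul_lt (c₂ + p⁻¹)))).exists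
  -- `(a, b) = A m` lies below `τ n ∈ E`, while `b > p⁻¹ a ≥ τ n`
  have ha := hA.1 m
  have hfree := (hA.2.1 m).2.2.1
  have hσa : σ m ≤ (A m).1 :=
    (le_or_ge_of_Ioo_inter_eq_empty hfree (hσ.2.2 m).1).resolve_right
      fun hbσ => by nlinarith [inv_pos.2 hp]
  have haτ : (A m).1 < τ n := by nlinarith [hτ.pos hE n]
  have hbτ : (A m).2 ≤ τ n :=
    (le_or_ge_of_Ioo_inter_eq_empty hfree (hτ.2.2 n).1).resolve_left (not_le.2 haτ)
  have hτa : τ n ≤ p⁻¹ * (A m).1 := by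
    rw [inv_mul_eq_div, le_div_iff₀ hp, mul_comm, div_mul_eq_mul_div]
    exact hpσ.trans hσa
  nlinarith

lemma hasPorousScales_of_gaps_below {c : ℝ} (hτ : ∀ n, 0 < τ n) (hτ0 : Tendsto τ atTop (𝓝 0))
    (hc : 0 < c)
    (hgap : ∀ j : ℕ, ∀ᶠ n in atTop, ∃ a b, IsCompExt E a b ∧ j * a ≤ τ n ∧ c * τ n ≤ b) :
    HasPorousScales E τ := by
  have hpos : ∀ n, 0 < c * τ n := fun n => mul_pos hc (hτ n)
  refine ⟨fun n => c * τ n, hpos, by simpa using hτ0.const_mul c, tendsto_order.2 ⟨?_, ?_⟩,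
    c⁻¹, c⁻¹, inv_pos.2 hc, inv_pos.2 hc, Eventually.of_forall fun n => by simp [hc.ne']⟩
  · intro θ hθ
    set θ' := max θ 0
    have hθ'0 : 0 ≤ θ' := le_max_right θ 0
    have hθ' : 0 < c * (1 - θ') := mul_pos hc (by simp [θ', hθ])
    obtain ⟨j, hj⟩ := exists_nat_gt (1 / (c * (1 - θ')))
    rw [div_lt_iff₀ hθ'] at hj
    filter_upwards [hgap j] with n ⟨a, b, hab, hja, hb⟩
    have ha : a < (1 - θ') * (c * τ n) := by nlinarith [hab.1, hτ n]
    have hfree : Ioo a (c * τ n) ∩ E = ∅ :=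
      subset_empty_iff.1 (hab.2.2.1 ▸ inter_subset_inter_left E (Ioo_subset_Ioo_right hb))
    have hlam := le_lambda0 hab.1 (by nlinarith [mul_nonneg hθ'0 (hpos n).le]) le_rfl hfree
    rw [lt_div_iff₀ (hpos n)]
    nlinarith [mul_le_mul_of_nonneg_right (le_max_left θ 0) (hpos n).le]
  · exact fun θ hθ => Eventually.of_forall fun n =>
      ((div_le_one (hpos n)).2 (lambda0_le_self (hpos n).le)).trans_lt hθ

lemma stronglyPorousWrt_of_gaps_above {K : ℝ} (hτ : ∀ n, 0 < τ n) (hτ0 : Tendsto τ atTop (𝓝 0))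
    (hK : 0 < K) (hgap : ∀ j : ℕ, ∀ᶠ n in atTop,
      ∃ a b, IsCompExt E a b ∧ τ n ≤ a ∧ a ≤ K * τ n ∧ j * a ≤ b) :
    StronglyPorousWrt E τ := by
  obtain ⟨J, hJ, hJgap⟩ := exists_tendsto_atTop_eventually_diag hgap
  obtain ⟨A, hA, hAgap⟩ := exists_forall_eventually_of_eventually_exists
    (P := fun n (x : ℝ × ℝ) => IsCompExt E x.1 x.2 ∧ τ n ≤ x.1 ∧ x.1 ≤ K * τ n ∧ J n * x.1 ≤ x.2)
    (Q := fun x => IsCompExt E x.1 x.2 ∧ 0 < x.1)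
    (hJgap.mono fun n ⟨a, b, h⟩ => ⟨(a, b), h⟩) fun n x hx => ⟨hx.1, (hτ n).trans_le hx.2.1⟩
  have hb : ∀ n, 0 < (A n).2 := fun n => (hA n).2.trans (hA n).1.2.1
  refine ⟨A, ⟨fun n => (hA n).2, fun n => (hA n).1, ?_, ?_⟩, K⁻¹, 1, inv_pos.2 hK, one_pos, ?_⟩
  · exact squeeze_zero' (Eventually.of_forall fun n => (hA n).2.le)
      (hAgap.mono fun n h => h.2.2.1) (by simpa using hτ0.const_mul K)
  · rw [tendsto_sub_div_self_iff fun n => (hb n).ne']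
    refine squeeze_zero' (Eventually.of_forall fun n => div_nonneg (hA n).2.le (hb n).le) ?_
      (tendsto_natCast_atTop_atTop.comp hJ).inv_tendsto_atTop
    filter_upwards [hAgap, hJ.eventually_ge_atTop 1] with n h hJn
    show _ ≤ ((J n : ℝ))⁻¹
    rw [div_le_iff₀ (hb n), inv_mul_eq_div, le_div_iff₀ (by exact_mod_cast hJn)]
    linarith [h.2.2.2]
  · filter_upwards [hAgap] with n h
    exact ⟨by rw [inv_mul_le_iff₀ hK]; exact h.2.2.1, by linarith [h.2.1]⟩

lemma exists_memE0d_frequently_mem_Ioc (hE : E ⊆ Ici 0) (hτ : memE0d E τ) {j : ℕ → ℕ}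
    (hj : ∀ K : ℕ, ∃ᶠ n in atTop, ShortGaps E (j K) (τ n) ((K + 1) * τ n)) :
    ∃ σ, memE0d E σ ∧ ∀ K : ℕ, ∃ᶠ m in atTop, ∃ n, ShortGaps E (j K) (τ n) ((K + 1) * τ n) ∧
      (K + 1) * τ n < σ m ∧ σ m ≤ (j K + 2) * ((K + 1) * τ n) := by
  have hτpos := hτ.pos hE
  have hτE : ∀ n, τ n ∈ E := fun n => (hτ.2.2 n).1
  refine exists_memE0d_frequently (Q := fun K y => ∃ n, ShortGaps E (j K) (τ n) ((K + 1) * τ n) ∧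
    (K + 1) * τ n < y ∧ y ≤ (j K + 2) * ((K + 1) * τ n)) fun K ε hε => ?_
  obtain ⟨n, hn, hnε⟩ := ((hj K).and_eventually (hτ.2.1.eventually_lt_const
    (u := min ε (τ 0) / ((j K + 2) * (K + 1))) (by have := hτpos 0; positivity))).exists
  have hv : (j K + 2) * ((K + 1) * τ n) < min ε (τ 0) := by
    rw [lt_div_iff₀ (by positivity)] at hnε
    linarith
  have hKτ : 0 < (K + 1) * τ n := mul_pos (by positivity) (hτpos n)
  obtain ⟨y, hyE, hvy, hyv⟩ := exists_mem_Ioc_of_short_gaps (hτpos n).le (hτE n)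
    (Nat.cast_nonneg _) hn (le_mul_of_one_le_left (hτpos n).le (by simp)) hKτ
    ⟨τ 0, hτE 0, hv.le.trans (min_le_right _ _)⟩
  exact ⟨y, hyE, hKτ.trans hvy, hyv.trans_lt (hv.trans_le (min_le_left _ _)), n, hn, hvy, hyv⟩

lemma exists_gaps_above_of_hasPorousScales (hE : E ⊆ Ici 0)
    (H : ∀ σ, memE0d E σ → HasPorousScales E σ) (hτ : memE0d E τ) :
    ∃ K : ℕ, ∀ j : ℕ, ∀ᶠ n in atTop,
      ∃ a b, IsCompExt E a b ∧ τ n ≤ a ∧ a ≤ (K + 1) * τ n ∧ j * a ≤ b := by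
  by_contra! hneg
  choose j hj using hneg
  obtain ⟨σ, hσ, hσQ⟩ := exists_memE0d_frequently_mem_Ioc hE hτ hj
  obtain ⟨h, hpos, h0, hlam, c₁, c₂, hc₁, hc₂, hhσ⟩ := H σ hσ
  obtain ⟨K, hK⟩ := exists_nat_ge (2 * c₂)
  set r : ℝ := (j K : ℝ)
  have hr : 0 ≤ r := Nat.cast_nonneg _
  set θ := max (1 / 2) (max (r / (r + 1)) (1 - c₁ / (r + 2)))
  have hθ : θ < 1 := max_lt (by norm_num) (max_lt ((div_lt_one (by positivity)).2 (by linarith))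
    (sub_lt_self _ (by positivity)))
  have hτ0 : 0 < τ 0 := hτ.pos hE 0
  obtain ⟨m, ⟨n, hshort, hvσ, hσv⟩, ⟨⟨hc₁h, hhc₂⟩, hθlam⟩, hhτ⟩ := ((hσQ K).and_eventually
    ((hhσ.and (hlam.eventually_const_lt hθ)).and (h0.eventually_lt_const hτ0))).exists
  have hm := hpos m
  have hbound := lambda0_le_of_short_gaps (hτ.pos hE n).le (hτ.2.2 n).1 hr hshort
    ⟨τ 0, (hτ.2.2 0).1, hhτ.le⟩
  have hu : τ n ≤ 1 / 2 * h m := by nlinarith [hτ.pos hE n]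
  have hv : c₁ / (r + 2) * h m ≤ (K + 1) * τ n := by
    rw [div_mul_eq_mul_div, div_le_iff₀ (by positivity)]
    nlinarith
  have hθ₃ : (1 - c₁ / (r + 2)) * h m ≤ θ * h m :=
    mul_le_mul_of_nonneg_right ((le_max_right _ _).trans (le_max_right _ _)) hm.le
  have hθh : lambda0 E (h m) ≤ θ * h m := hbound.trans <| max_le
    (hu.trans (mul_le_mul_of_nonneg_right (le_max_left _ _) hm.le)) <| max_le
      (mul_le_mul_of_nonneg_right ((le_max_left _ _).trans (le_max_right _ _)) hm.le)
      (by linarith)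
  rw [lt_div_iff₀ hm] at hθlam
  linarith

end Sequences

theorem stmt15 (E : Set ℝ) (hE : E ⊆ Set.Ici 0) (hpor : porosity E = 1) :
    CSP E ↔ ∀ τ : ℕ → ℝ, memE0d E τ →
      ∃ h : ℕ → ℝ, (∀ n, 0 < h n) ∧ Filter.Tendsto h Filter.atTop (nhds 0) ∧
        Filter.Tendsto (fun n => lambda0 E (h n) / h n) Filter.atTop (nhds (porosity E)) ∧
        SeqEquiv h τ := by
  rw [hpor]
  refine ⟨fun hcsp τ hτ => ?_, fun H τ hτ => ?_⟩
  · obtain ⟨c, hc, hgap⟩ := hcsp.exists_gaps_below hE hτ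
    exact hasPorousScales_of_gaps_below (hτ.pos hE) hτ.2.1 hc hgap
  · obtain ⟨K, hK⟩ := exists_gaps_above_of_hasPorousScales hE H hτ
    exact stronglyPorousWrt_of_gaps_above (hτ.pos hE) hτ.2.1 (by positivity) hK
end

section
/- Let E ⊆ [0,∞) be strongly porous on the right at 0, let τ̃ = {τₙ} be an almost decreasing sequence in E∖{0} with τₙ → 0, and let h̃ = {hₙ} be a sequence of positive numbers with hₙ → 0 and λ(E,0,hₙ)/hₙ → p⁺(E,0). If τ̃ ≍ h̃, then there exists {(aₙ,bₙ)} ∈ Ĩ_E such that {τₙ} ≍ {bₙ}. -/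
open Filter Set Topology ENNReal

lemma lambda0_le (E : Set ℝ) (h : ℝ) (hh : 0 ≤ h) : lambda0 E h ≤ h := by
  refine csSup_le ⟨0, 0, 0, le_refl 0, le_refl 0, hh, by simp, by ring⟩ ?_
  rintro l ⟨a, b, ha, hab, hbh, -, rfl⟩; linarith

lemma exists_gap (E : Set ℝ) (h δ : ℝ) (hh : 0 ≤ h) (hδ : 0 < δ) :
    ∃ α β : ℝ, 0 ≤ α ∧ α ≤ β ∧ β ≤ h ∧ Set.Ioo α β ∩ E = ∅ ∧ lambda0 E h - δ < β - α := by
  have hne : {l : ℝ | ∃ a b : ℝ, 0 ≤ a ∧ a ≤ b ∧ b ≤ h ∧ Set.Ioo a b ∩ E = ∅ ∧ l = b - a}.Nonempty :=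
    ⟨0, 0, 0, le_refl 0, le_refl 0, hh, by simp, by ring⟩
  have hlt : lambda0 E h - δ < lambda0 E h := by linarith
  obtain ⟨l, ⟨a, b, ha, hab, hbh, hgap, rfl⟩, hl⟩ := exists_lt_of_lt_csSup hne hlt
  exact ⟨a, b, ha, hab, hbh, hgap, hl⟩

lemma comp_of_gap (E : Set ℝ) (h ε t e α β : ℝ)
    (hh : 0 < h) (hε : 0 < ε) (hε1 : ε < 1)
    (hα : 0 ≤ α) (hβh : β ≤ h) (hgap : Set.Ioo α β ∩ E = ∅)
    (hlen : (1 - ε) * h ≤ β - α)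
    (ht : t ∈ E) (htα : ε * h < t)
    (he : e ∈ E) (he0 : 0 < e) (heβ : e < (1 - ε) * h) :
    ∃ a b : ℝ, 0 < a ∧ IsCompExt E a b ∧ a ≤ ε * h ∧ (1 - ε) * h ≤ b ∧ b ≤ t := by
  have hαβ : α < β := by nlinarith
  have hαε : α ≤ ε * h := by nlinarith
  have hβε : (1 - ε) * h ≤ β := by nlinarith
  have hnot : ∀ y ∈ E, y ∉ Set.Ioo α β := by
    intro y hy hmem; exact absurd (Set.mem_inter hmem hy) (by rw [hgap]; exact notMem_empty y)
  have htβ : β ≤ t := by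
    by_contra hc; push_neg at hc
    exact hnot t ht ⟨lt_of_le_of_lt hαε htα, hc⟩
  have heα : e ≤ α := by
    by_contra hc; push_neg at hc
    exact hnot e he ⟨hc, lt_of_lt_of_le heβ hβε⟩
  set x := (α + β) / 2 with hx
  have hαx : α < x := by simp only [hx]; linarith
  have hxβ : x < β := by simp only [hx]; linarith
  set S := (E ∪ {0}) ∩ Set.Iic x with hS
  set T := (E ∪ {t}) ∩ Set.Ici x with hT
  have hSne : S.Nonempty := ⟨e, Or.inl he, le_of_lt (lt_of_le_of_lt heα hαx)⟩
  have hSbdd : BddAbove S := ⟨x, fun s hs => hs.2⟩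
  have hSα : ∀ s ∈ S, s ≤ α := by
    rintro s ⟨hs1, hs2⟩
    rcases hs1 with hsE | hs0
    · by_contra hc; push_neg at hc
      exact hnot s hsE ⟨hc, lt_of_le_of_lt hs2 hxβ⟩
    · simp at hs0; linarith
  have hTne : T.Nonempty := ⟨t, Or.inr rfl, le_of_lt (lt_of_lt_of_le hxβ htβ)⟩
  have hTbdd : BddBelow T := ⟨x, fun s hs => hs.2⟩
  have hTβ : ∀ s ∈ T, β ≤ s := by
    rintro s ⟨hs1, hs2⟩
    rcases hs1 with hsE | hst
    · by_contra hc; push_neg at hc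
      exact hnot s hsE ⟨lt_of_lt_of_le hαx hs2, hc⟩
    · simp only [Set.mem_singleton_iff] at hst; rw [hst]; exact htβ
  refine ⟨sSup S, sInf T, ?_, ⟨?_, ?_, ?_, ?_⟩, ?_, ?_, ?_⟩
  · exact lt_of_lt_of_le he0 (le_csSup hSbdd ⟨Or.inl he, le_of_lt (lt_of_le_of_lt heα hαx)⟩)
  · exact le_of_lt (lt_of_lt_of_le he0 (le_csSup hSbdd ⟨Or.inl he, le_of_lt (lt_of_le_of_lt heα hαx)⟩))
  · calc sSup S ≤ α := csSup_le hSne hSα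
      _ < β := hαβ
      _ ≤ sInf T := le_csInf hTne hTβ
  · ext y; simp only [Set.mem_inter_iff, Set.mem_Ioo, Set.mem_empty_iff_false, iff_false]
    rintro ⟨⟨hy1, hy2⟩, hyE⟩
    rcases le_or_gt y x with hyx | hyx
    · exact absurd (le_csSup hSbdd ⟨Or.inl hyE, hyx⟩) (not_le.mpr hy1)
    · exact absurd (csInf_le hTbdd ⟨Or.inl hyE, le_of_lt hyx⟩) (not_le.mpr hy2)
  · intro c d hc hsub hne
    have hab : sSup S < sInf T := by
      calc sSup S ≤ α := csSup_le hSne hSα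
        _ < β := hαβ
        _ ≤ sInf T := le_csInf hTne hTβ
    rw [Set.Ioo_subset_Ioo_iff hab] at hsub
    have hcd : c < sSup S ∨ sInf T < d := by
      rcases lt_or_eq_of_le hsub.1 with h1 | h1
      · exact Or.inl h1
      rcases lt_or_eq_of_le hsub.2 with h2 | h2
      · exact Or.inr h2
      · exact absurd (by rw [h1, h2]) hne
    rcases hcd with hcd | hcd
    · obtain ⟨s, hsS, hcs⟩ := exists_lt_of_lt_csSup hSne hcd
      have hsE : s ∈ E := by
        rcases hsS.1 with h'|h'
        · exact h'
        · simp only [Set.mem_singleton_iff] at h'; rw [h'] at hcs; linarith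
      intro hemp
      have hsd : s < d := lt_of_lt_of_le (lt_of_le_of_lt (le_csSup hSbdd hsS) hab) hsub.2
      have : s ∈ Set.Ioo c d ∩ E := ⟨⟨hcs, hsd⟩, hsE⟩
      rw [hemp] at this; exact this
    · obtain ⟨u, huT, hud⟩ := exists_lt_of_csInf_lt hTne hcd
      have huE : u ∈ E := by
        rcases huT.1 with h'|h'
        · exact h'
        · simp only [Set.mem_singleton_iff] at h'; rw [h']; exact ht
      intro hemp
      have huc : c < u := lt_of_le_of_lt (hsub.1) (lt_of_lt_of_le hab (csInf_le hTbdd huT))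
      have : u ∈ Set.Ioo c d ∩ E := ⟨⟨huc, hud⟩, huE⟩
      rw [hemp] at this; exact this
  · exact le_trans (csSup_le hSne hSα) hαε
  · exact le_trans hβε (le_csInf hTne hTβ)
  · exact csInf_le hTbdd ⟨Or.inr rfl, le_of_lt (lt_of_lt_of_le hxβ htβ)⟩

theorem stmt16 (E : Set ℝ) (hE : E ⊆ Set.Ici 0) (hpor : porosity E = 1)
    (τ : ℕ → ℝ) (hτ : memE0d E τ) (h : ℕ → ℝ) (hhpos : ∀ n, 0 < h n)
    (hh0 : Filter.Tendsto h Filter.atTop (nhds 0))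
    (hhlam : Filter.Tendsto (fun n => lambda0 E (h n) / h n) Filter.atTop
      (nhds (porosity E)))
    (heq : SeqEquiv h τ) :
    ∃ A : ℕ → ℝ × ℝ, memIE E A ∧ SeqEquiv (fun n => (A n).2) τ := by
  obtain ⟨hdecr, hτ0, hτE⟩ := hτ
  obtain ⟨c₁, c₂, hc₁, hc₂, hev⟩ := heq
  have hτpos : ∀ n, 0 < τ n := fun n =>
    lt_of_le_of_ne (hE (hτE n).1) (Ne.symm (hτE n).2)
  set δ : ℕ → ℝ := fun n => 1 - lambda0 E (h n) / h n + 1 / (n + 1) with hδdef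
  have hδpos : ∀ n, 0 < δ n := by
    intro n
    have h1 : lambda0 E (h n) / h n ≤ 1 :=
      (div_le_one (hhpos n)).mpr (lambda0_le E (h n) (le_of_lt (hhpos n)))
    have h2 : (0:ℝ) < 1 / (n + 1) := by positivity
    simp only [hδdef]; linarith
  have hδ0 : Filter.Tendsto δ Filter.atTop (nhds 0) := by
    rw [hpor] at hhlam
    have h1 : Filter.Tendsto (fun n : ℕ => 1 - lambda0 E (h n) / h n) Filter.atTop (nhds 0) := by
      have := (tendsto_const_nhds (x := (1:ℝ)) (f := Filter.atTop (α := ℕ))).sub hhlam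
      simpa using this
    have h2 : Filter.Tendsto (fun n : ℕ => 1 / ((n:ℝ) + 1)) Filter.atTop (nhds 0) :=
      tendsto_one_div_add_atTop_nhds_zero_nat
    have h3 := h1.add h2
    rw [hδdef]
    simpa using h3
  clear_value δ
  -- eventual goodness
  have hPev : ∀ᶠ n in Filter.atTop,
      (∃ a b : ℝ, 0 < a ∧ IsCompExt E a b ∧ a ≤ δ n * h n ∧ (1 - δ n) * h n ≤ b ∧ b ≤ τ n)
      ∧ δ n ≤ 1/2 ∧ c₁ * h n ≤ τ n ∧ τ n ≤ c₂ * h n := by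
    have hδa : ∀ᶠ n in Filter.atTop, δ n < min c₁ (1/2) := by
      have := hδ0.eventually (eventually_lt_nhds (lt_min hc₁ (by norm_num : (0:ℝ) < 1/2)))
      simpa using this
    filter_upwards [hδa, hev] with n hδn hevn
    have hδc₁ : δ n < c₁ := lt_of_lt_of_le hδn (min_le_left _ _)
    have hδhalf : δ n < 1/2 := lt_of_lt_of_le hδn (min_le_right _ _)
    refine ⟨?_, le_of_lt hδhalf, hevn.1, hevn.2⟩
    obtain ⟨α, β, hα, hαβ, hβh, hgap, hlen⟩ :=
      exists_gap E (h n) (h n / (n + 1)) (le_of_lt (hhpos n)) (div_pos (hhpos n) (by positivity))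
    -- find small element e of E
    have hsm : ∀ᶠ m in Filter.atTop, τ m < h n / 2 := by
      have := hτ0.eventually (eventually_lt_nhds (half_pos (hhpos n)))
      simpa using this
    obtain ⟨m, hm⟩ := hsm.exists
    have hlen' : (1 - δ n) * h n ≤ β - α := by
      have hne : (h n) ≠ 0 := ne_of_gt (hhpos n)
      have : (1 - δ n) * h n = lambda0 E (h n) - h n / ((n:ℝ) + 1) := by
        simp only [hδdef]; field_simp; ring
      linarith
    have heβ : τ m < (1 - δ n) * h n := by nlinarith [mul_le_mul_of_nonneg_right hδhalf.le (hhpos n).le]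
    have htα : δ n * h n < τ n := by nlinarith [mul_lt_mul_of_pos_right hδc₁ (hhpos n)]
    exact comp_of_gap E (h n) (δ n) (τ n) (τ m) α β (hhpos n) (hδpos n)
      (by linarith) hα hβh hgap hlen' (hτE n).1 htα (hτE m).1 (hτpos m) heβ
  obtain ⟨N, hN⟩ := Filter.eventually_atTop.mp hPev
  set g : ℕ → ℕ := fun n => max n N with hg
  have hgN : ∀ n, N ≤ g n := fun n => le_max_right n N
  have hgtop : Filter.Tendsto g Filter.atTop Filter.atTop :=
    tendsto_atTop_mono (fun n => le_max_left n N) tendsto_id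
  have hgeq : ∀ n ≥ N, g n = n := fun n hn => max_eq_left hn
  clear_value g
  have hQ : ∀ n, ∃ a b : ℝ, 0 < a ∧ IsCompExt E a b ∧ a ≤ δ (g n) * h (g n) ∧
      (1 - δ (g n)) * h (g n) ≤ b ∧ b ≤ τ (g n) := fun n => (hN (g n) (hgN n)).1
  choose a b h1 h2 h3 h4 h5 using hQ
  have hδg : ∀ n, δ (g n) ≤ 1/2 := fun n => (hN (g n) (hgN n)).2.1
  have hbpos : ∀ n, 0 < b n := fun n => by
    have := h4 n
    nlinarith [mul_le_mul_of_nonneg_right (hδg n) (hhpos (g n)).le, hhpos (g n)]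
  have hbh2 : ∀ n, h (g n) / 2 ≤ b n := fun n => by
    have := h4 n; nlinarith [mul_le_mul_of_nonneg_right (hδg n) (hhpos (g n)).le]
  refine ⟨fun n => (a n, b n), ⟨h1, h2, ?_, ?_⟩, 1, 2 * c₂, one_pos, by positivity, ?_⟩
  · -- a → 0
    have hub : Filter.Tendsto (fun n => δ (g n) * h (g n)) Filter.atTop (nhds 0) := by
      have := (hδ0.comp hgtop).mul (hh0.comp hgtop)
      simpa using this
    exact tendsto_of_tendsto_of_tendsto_of_le_of_le tendsto_const_nhds hub
      (fun n => le_of_lt (h1 n)) h3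
  · -- (b-a)/b → 1
    have hlow : Filter.Tendsto (fun n => 1 - 2 * δ (g n)) Filter.atTop (nhds 1) := by
      have := ((hδ0.comp hgtop).const_mul (2:ℝ))
      have h' := (tendsto_const_nhds (x := (1:ℝ)) (f := Filter.atTop (α := ℕ))).sub this
      simpa using h'
    refine tendsto_of_tendsto_of_tendsto_of_le_of_le hlow tendsto_const_nhds
      (fun n => ?_) (fun n => ?_)
    · have hab : a n ≤ 2 * δ (g n) * b n := by
        nlinarith [h3 n, mul_le_mul_of_nonneg_left (h4 n) (by linarith [hδpos (g n)] : (0:ℝ) ≤ 2 * δ (g n)),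
          mul_nonneg (mul_nonneg (hδpos (g n)).le (by linarith [hδg n] : (0:ℝ) ≤ 1 - 2 * δ (g n))) (hhpos (g n)).le]
      have : a n / b n ≤ 2 * δ (g n) := (div_le_iff₀ (hbpos n)).mpr hab
      have heq' : (b n - a n) / b n = 1 - a n / b n := by
        rw [sub_div, div_self (ne_of_gt (hbpos n))]
      rw [heq']; linarith
    · apply div_le_one_of_le₀
      · linarith [h1 n]
      · exact le_of_lt (hbpos n)
  · -- SeqEquiv b τ
    rw [Filter.eventually_atTop]
    refine ⟨N, fun n hn => ?_⟩
    have hgn : g n = n := hgeq n hn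
    have hb5 := h5 n
    have hb2 := hbh2 n
    have hτc₂ : τ n ≤ c₂ * h n := (hN n hn).2.2.2
    rw [hgn] at hb5 hb2
    constructor
    · simpa using hb5
    · nlinarith [mul_le_mul_of_nonneg_left hb2 hc₂.le]
end

section
/- Let {xₙ} be a strictly decreasing sequence of positive reals with x_{n+1}/xₙ → 0, and let W = {0} ∪ {xₙ : n ∈ ℕ}. Then W is a closed completely strongly porous set, and the sequence {(x_{n+1}, xₙ)}_{n∈ℕ} belongs to Ĩ_W. -/
open Filter Set Topology ENNReal

/-!
The complement of `W = {0} ∪ {xₙ}` in `[0, ∞)` near `0` consists of the gaps `(xₙ₊₁, xₙ)`, and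
`xₙ₊₁ / xₙ → 0` says that in each gap the left endpoint is negligible against the right one.
A sequence `τ` in `W ∖ {0}` tending to `0` is `τₙ = x_{fₙ}` with `fₙ → ∞`, so the gaps
`(x_{fₙ}, x_{fₙ - 1})` have left endpoints exactly `τₙ` eventually.
-/

namespace StronglyPorous

variable {x : ℕ → ℝ}

theorem tendsto_zero_of_tendsto_ratio (hpos : ∀ n, 0 < x n)
    (hratio : Tendsto (fun n => x (n + 1) / x n) atTop (𝓝 0)) :
    Tendsto x atTop (𝓝 0) := by
  refine (summable_of_ratio_test_tendsto_lt_one zero_lt_one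
    (Eventually.of_forall fun n => (hpos n).ne') ?_).tendsto_atTop_zero
  simpa only [Real.norm_of_nonneg (hpos _).le] using hratio

theorem tendsto_sub_div_self_of_tendsto_ratio (hpos : ∀ n, 0 < x n)
    (hratio : Tendsto (fun n => x (n + 1) / x n) atTop (𝓝 0)) :
    Tendsto (fun n => (x n - x (n + 1)) / x n) atTop (𝓝 1) := by
  have h : Tendsto (fun n => 1 - x (n + 1) / x n) atTop (𝓝 (1 - 0)) :=
    tendsto_const_nhds.sub hratio
  rw [sub_zero] at h
  refine h.congr fun n => ?_
  rw [sub_div, div_self (hpos n).ne']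

theorem isCompExt_zero_union_range (hpos : ∀ n, 0 < x n) (hdec : StrictAnti x) (n : ℕ) :
    IsCompExt ({0} ∪ range x) (x (n + 1)) (x n) := by
  have hgap : x (n + 1) < x n := hdec n.lt_succ_self
  refine ⟨(hpos _).le, hgap, ?_, ?_⟩
  · rw [eq_empty_iff_forall_notMem]
    rintro y ⟨⟨hy₁, hy₂⟩, rfl | ⟨m, rfl⟩⟩
    · exact (hpos _).not_gt hy₁
    · have h₁ : m < n + 1 := hdec.lt_iff_gt.mp hy₁
      have h₂ : n < m := hdec.lt_iff_gt.mp hy₂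
      omega
  · intro c d _ hsub hne
    obtain ⟨hc, hd⟩ := (Ioo_subset_Ioo_iff hgap).mp hsub
    rw [← nonempty_iff_ne_empty]
    rcases hc.lt_or_eq with hc | rfl
    · exact ⟨x (n + 1), ⟨hc, hgap.trans_le hd⟩, Or.inr ⟨n + 1, rfl⟩⟩
    rcases hd.lt_or_eq with hd | rfl
    · exact ⟨x n, ⟨hgap, hd⟩, Or.inr ⟨n, rfl⟩⟩
    exact absurd rfl hne

theorem memIE_zero_union_range_comp (hpos : ∀ n, 0 < x n) (hdec : StrictAnti x)
    (hratio : Tendsto (fun n => x (n + 1) / x n) atTop (𝓝 0))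
    {g : ℕ → ℕ} (hg : Tendsto g atTop atTop) :
    memIE ({0} ∪ range x) (fun n => (x (g n + 1), x (g n))) :=
  ⟨fun _ => hpos _, fun n => isCompExt_zero_union_range hpos hdec (g n),
    ((tendsto_zero_of_tendsto_ratio hpos hratio).comp (tendsto_add_atTop_nat 1)).comp hg,
    (tendsto_sub_div_self_of_tendsto_ratio hpos hratio).comp hg⟩

theorem tendsto_atTop_of_tendsto_comp_zero (hpos : ∀ n, 0 < x n) (hdec : StrictAnti x)
    {f : ℕ → ℕ} (hf : Tendsto (fun n => x (f n)) atTop (𝓝 0)) :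
    Tendsto f atTop atTop :=
  tendsto_atTop.mpr fun N =>
    (hf.eventually (eventually_lt_nhds (hpos N))).mono fun _ hn => (hdec.lt_iff_gt.mp hn).le

theorem csp_zero_union_range (hpos : ∀ n, 0 < x n) (hdec : StrictAnti x)
    (hratio : Tendsto (fun n => x (n + 1) / x n) atTop (𝓝 0)) :
    CSP ({0} ∪ range x) := by
  rintro τ ⟨-, hτ, hτW⟩
  have hindex : ∀ n, ∃ m, x m = τ n := fun n =>
    (hτW n).1.resolve_left (hτW n).2
  choose f hf using hindex
  have hf_top : Tendsto f atTop atTop :=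
    tendsto_atTop_of_tendsto_comp_zero hpos hdec (by simpa only [hf] using hτ)
  -- The gap to the right of `x (f n)`; for `f n = 0` this is the junk gap `(x 1, x 0)`.
  refine ⟨fun n => (x (f n - 1 + 1), x (f n - 1)),
    memIE_zero_union_range_comp hpos hdec hratio ((tendsto_sub_atTop_nat 1).comp hf_top),
    1, 1, one_pos, one_pos, ?_⟩
  filter_upwards [hf_top.eventually_ge_atTop 1] with _ hn
  rw [Nat.sub_add_cancel hn, hf, one_mul]
  exact ⟨le_rfl, le_rfl⟩

end StronglyPorous

theorem stmt18 (x : ℕ → ℝ) (hpos : ∀ n, 0 < x n) (hdec : StrictAnti x)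
    (hratio : Filter.Tendsto (fun n => x (n + 1) / x n) Filter.atTop (nhds 0))
    (W : Set ℝ) (hW : W = {0} ∪ Set.range x) :
    IsClosed W ∧ CSP W ∧ memIE W (fun n => (x (n + 1), x n)) := by
  subst hW
  exact ⟨(StronglyPorous.tendsto_zero_of_tendsto_ratio hpos hratio).isCompact_insert_range.isClosed,
    StronglyPorous.csp_zero_union_range hpos hdec hratio,
    StronglyPorous.memIE_zero_union_range_comp hpos hdec hratio tendsto_id⟩
end

section
/- Let {xₙ} be a strictly decreasing sequence of positive reals with x_{n+1}/xₙ → 0, let q ≥ 1, and let W(q) = ⋃_{x ∈ W} [x, qx] where W = {0} ∪ {xₙ : n ∈ ℕ}. Then W(q) is a closed completely strongly porous set, and if m₀ ∈ ℕ satisfies qx_{n+1} < xₙ for all n ≥ m₀, then the sequence {(q x_{m₀+n+1}, x_{m₀+n})}_{n∈ℕ} belongs to Ĩ_{W(q)}. -/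
open Filter Set Topology ENNReal

theorem stmt19 (x : ℕ → ℝ) (hpos : ∀ n, 0 < x n) (hdec : StrictAnti x)
    (hratio : Filter.Tendsto (fun n => x (n + 1) / x n) Filter.atTop (nhds 0))
    (q : ℝ) (hq : 1 ≤ q) (W Wq : Set ℝ) (hW : W = {0} ∪ Set.range x)
    (hWq : Wq = ⋃ y ∈ W, Set.Icc y (q * y)) :
    IsClosed Wq ∧ CSP Wq ∧
      ∀ m₀ : ℕ, (∀ n ≥ m₀, q * x (n + 1) < x n) →
        memIE Wq (fun n => (q * x (m₀ + n + 1), x (m₀ + n))) := by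
  have hq0 : (0:ℝ) < q := lt_of_lt_of_le one_pos hq
  have hxW : ∀ n, x n ∈ W := fun n => hW ▸ Or.inr ⟨n, rfl⟩
  have hsub : ∀ n, Set.Icc (x n) (q * x n) ⊆ Wq := by
    intro n
    intro z hz
    rw [hWq]
    exact Set.mem_biUnion (hxW n) hz
  have h0Wq : (0:ℝ) ∈ Wq := by
    rw [hWq]
    have h0W : (0:ℝ) ∈ W := by rw [hW]; left; rfl
    refine Set.mem_biUnion h0W ?_
    simp
  have hmemD : ∀ z ∈ Wq, z = 0 ∨ ∃ n, x n ≤ z ∧ z ≤ q * x n := by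
    intro z hz
    rw [hWq] at hz
    simp only [Set.mem_iUnion, Set.mem_Icc, exists_prop] at hz
    obtain ⟨y, hyW, hy1, hy2⟩ := hz
    rw [hW] at hyW
    rcases hyW with h0 | ⟨n, rfl⟩
    · left
      simp only [Set.mem_singleton_iff] at h0
      subst h0
      rw [mul_zero] at hy2
      linarith
    · right; exact ⟨n, hy1, hy2⟩
  have hnonneg : ∀ z ∈ Wq, 0 ≤ z := by
    intro z hz
    rcases hmemD z hz with rfl | ⟨n, h1, _⟩
    · exact le_refl 0
    · exact le_trans (hpos n).le h1
  have hx0 : Filter.Tendsto x Filter.atTop (nhds 0) := by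
    have h1 : Filter.Tendsto (fun n => x (n+1)) Filter.atTop (nhds 0) := by
      have hb : Filter.Tendsto (fun n => x (n+1) / x n * x 0) Filter.atTop (nhds 0) := by
        simpa using hratio.mul_const (x 0)
      apply squeeze_zero (fun n => (hpos _).le) (fun n => ?_) hb
      have h1 : x (n+1) / x n * x n ≤ x (n+1) / x n * x 0 :=
        mul_le_mul_of_nonneg_left (hdec.antitone (Nat.zero_le n))
          (div_nonneg (hpos _).le (hpos _).le)
      rwa [div_mul_cancel₀ _ (hpos n).ne'] at h1
    exact (Filter.tendsto_add_atTop_iff_nat 1).mp h1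
  have hcomp : ∀ m, q * x (m+1) < x m → IsCompExt Wq (q * x (m+1)) (x m) := by
    intro m hlt
    refine ⟨(mul_pos hq0 (hpos _)).le, hlt, ?_, ?_⟩
    · rw [Set.eq_empty_iff_forall_notMem]
      rintro y ⟨⟨hy1, hy2⟩, hyW⟩
      rcases hmemD y hyW with rfl | ⟨j, hj1, hj2⟩
      · have : (0:ℝ) < q * x (m+1) := mul_pos hq0 (hpos _)
        linarith
      · have hjm : m < j := by
          by_contra h
          push_neg at h
          exact absurd (lt_of_le_of_lt hj1 hy2) (not_lt.2 (hdec.antitone h))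
        have h1 : x j ≤ x (m+1) := hdec.antitone hjm
        have h2 : q * x j ≤ q * x (m+1) := mul_le_mul_of_nonneg_left h1 hq0.le
        linarith
    · rintro c d hc hsub' hne
      obtain ⟨hca, hbd⟩ := (Set.Ioo_subset_Ioo_iff hlt).mp hsub'
      rcases lt_or_eq_of_le hca with h | h
      · intro hemp
        have haW : q * x (m+1) ∈ Wq :=
          hsub (m+1) ⟨le_mul_of_one_le_left (hpos _).le hq, le_refl _⟩
        exact (Set.eq_empty_iff_forall_notMem.mp hemp _)
          ⟨⟨h, lt_of_lt_of_le hlt hbd⟩, haW⟩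
      · rcases lt_or_eq_of_le hbd with h2 | h2
        · intro hemp
          have hbW : x m ∈ Wq := hsub m ⟨le_refl _, le_mul_of_one_le_left (hpos _).le hq⟩
          refine (Set.eq_empty_iff_forall_notMem.mp hemp _) ⟨⟨?_, h2⟩, hbW⟩
          rw [h]; exact hlt
        · exact absurd (by rw [Prod.mk.injEq]; exact ⟨h, h2.symm⟩) hne
  have hbuild : ∀ (m₀ : ℕ), (∀ n ≥ m₀, q * x (n+1) < x n) → ∀ K : ℕ → ℕ,
      (∀ n, m₀ + 1 ≤ K n) → Filter.Tendsto K Filter.atTop Filter.atTop →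
      memIE Wq (fun n => (q * x (K n), x (K n - 1))) := by
    intro m₀ hm K hK1 hKtop
    have hKeq : ∀ n, K n - 1 + 1 = K n := fun n => by
      have := hK1 n; omega
    have hlt : ∀ n, q * x (K n) < x (K n - 1) := fun n => by
      have h := hm (K n - 1) (by have := hK1 n; omega)
      rwa [hKeq n] at h
    have htop' : Filter.Tendsto (fun n => K n - 1) Filter.atTop Filter.atTop := by
      refine Filter.tendsto_atTop.2 fun b => ?_
      filter_upwards [hKtop.eventually_ge_atTop (b+1)] with n hn
      omega
    refine ⟨fun n => mul_pos hq0 (hpos _), fun n => ?_, ?_, ?_⟩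
    · have h := hcomp (K n - 1) (by rw [hKeq]; exact hlt n)
      rwa [hKeq n] at h
    · have h := (hx0.comp hKtop).const_mul q
      rw [mul_zero] at h
      exact h
    · have hab : Filter.Tendsto (fun n => q * x (K n) / x (K n - 1))
          Filter.atTop (nhds 0) := by
        have h := (hratio.comp htop').const_mul q
        rw [mul_zero] at h
        refine h.congr fun n => ?_
        simp only [Function.comp]
        rw [hKeq n, mul_div_assoc]
      have h1 : Filter.Tendsto (fun n => 1 - q * x (K n) / x (K n - 1))
          Filter.atTop (nhds (1 - 0)) := tendsto_const_nhds.sub hab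
      rw [sub_zero] at h1
      refine h1.congr fun n => ?_
      rw [eq_comm, sub_div, div_self (hpos (K n - 1)).ne']
  refine ⟨?_, ?_, ?_⟩
  · rw [← isOpen_compl_iff, isOpen_iff_forall_mem_open]
    intro y hy
    rcases le_or_gt y 0 with hy0 | hy0
    · have hylt : y < 0 := lt_of_le_of_ne hy0 (fun h => hy (by rw [h]; exact h0Wq))
      exact ⟨Set.Iio 0, fun z hz hzW => absurd (hnonneg z hzW) (not_le.2 hz),
        isOpen_Iio, hylt⟩
    · have hfin : {n | y/2 ≤ q * x n}.Finite := by
        have h1 : ∀ᶠ n in Filter.atTop, q * x n < y/2 := by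
          have h := hx0.const_mul q
          rw [mul_zero] at h
          exact h.eventually_lt_const (by linarith)
        rw [← Nat.cofinite_eq_atTop] at h1
        have h2 := Filter.eventually_cofinite.mp h1
        convert h2 using 1
        ext n; simp [not_lt]
      have hKc : IsClosed (⋃ n ∈ {n | y/2 ≤ q * x n}, Set.Icc (x n) (q * x n)) :=
        hfin.isClosed_biUnion fun n _ => isClosed_Icc
      refine ⟨(⋃ n ∈ {n | y/2 ≤ q * x n}, Set.Icc (x n) (q * x n))ᶜ ∩ Set.Ioi (y/2),
        ?_, hKc.isOpen_compl.inter isOpen_Ioi, ?_, half_lt_self hy0⟩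
      · rintro z ⟨hzK, hz2⟩ hzW
        rw [Set.mem_Ioi] at hz2
        rcases hmemD z hzW with rfl | ⟨n, h1, h2⟩
        · linarith
        · exact hzK (Set.mem_biUnion (le_trans hz2.le h2) ⟨h1, h2⟩)
      · exact fun hyK => hy (Set.iUnion₂_subset (fun n _ => hsub n) hyK)
  · intro τ hτ
    obtain ⟨hτd, hτ0, hτmem⟩ := hτ
    have hev : ∀ᶠ n in Filter.atTop, q * x (n+1) < x n := by
      have h1 : ∀ᶠ n in Filter.atTop, x (n+1)/x n < 1/q :=
        hratio.eventually_lt_const (one_div_pos.mpr hq0)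
      filter_upwards [h1] with n hn
      rw [div_lt_div_iff₀ (hpos n) hq0] at hn
      linarith
    obtain ⟨m₀, hm₀⟩ := Filter.eventually_atTop.mp hev
    have hchoice : ∀ n, ∃ j, x j ≤ τ n ∧ τ n ≤ q * x j := fun n => by
      rcases hmemD (τ n) (hτmem n).1 with h | h
      · exact absurd (by simp [h] : τ n ∈ ({0} : Set ℝ)) (hτmem n).2
      · exact h
    choose k hk1 hk2 using hchoice
    have hktop : Filter.Tendsto k Filter.atTop Filter.atTop := by
      refine Filter.tendsto_atTop.2 fun N => ?_
      have h := hτ0.eventually_lt_const (hpos N)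
      filter_upwards [h] with n hn
      by_contra hcon
      push_neg at hcon
      have h2 : x N ≤ x (k n) := hdec.antitone hcon.le
      linarith [hk1 n]
    have hKtop : Filter.Tendsto (fun n => max (m₀+1) (k n)) Filter.atTop Filter.atTop :=
      tendsto_atTop_mono (fun n => le_max_right _ _) hktop
    have hIE := hbuild m₀ hm₀ (fun n => max (m₀+1) (k n)) (fun n => le_max_left _ _) hKtop
    refine ⟨_, hIE, 1/q, 1, one_div_pos.mpr hq0, one_pos, ?_⟩
    filter_upwards [hktop.eventually_ge_atTop (m₀+1)] with n hn
    have hKn : max (m₀+1) (k n) = k n := max_eq_right hn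
    constructor
    · show 1/q * (q * x (max (m₀+1) (k n))) ≤ τ n
      rw [hKn]
      have heq : 1/q * (q * x (k n)) = x (k n) := by field_simp
      rw [heq]; exact hk1 n
    · show τ n ≤ 1 * (q * x (max (m₀+1) (k n)))
      rw [hKn, one_mul]; exact hk2 n
  · intro m₀ hm
    have h := hbuild m₀ hm (fun n => m₀ + n + 1)
      (fun n => by show m₀ + 1 ≤ m₀ + n + 1; omega)
      (tendsto_atTop_mono (f := id) (fun n => by show n ≤ m₀ + n + 1; omega) tendsto_id)
    exact h
end
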